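/- Let Γ be a finite simple graph with vertex set V, let G_p be groups for p ∈ V, and let Γ' be a full subgraph of Γ on a subset V' ⊆ V. Then the natural homomorphism from the graph product G_{Γ'} (of the groups G_p, p ∈ V') to the graph product G_Γ is injective. -/

import Mathlib

/-!
The inclusion of the vertex groups of `Γ'` induces a homomorphism `G_{Γ'} → G_Γ`, and sending
`G_p` identically to itself for `p ∈ V'` and trivially for `p ∉ V'` induces a retraction
`G_Γ → G_{Γ'}`: an edge relation of `Γ` either has an endpoint outside `V'`, so that it
becomes trivial, or is an edge of the full subgraph `Γ'`. A map with a left inverse is injective.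
-/

open Monoid

/-- The relator subgroup of the graph product: the normal closure of the commutators
`[of g, of g']` for `g ∈ G p`, `g' ∈ G q` with `{p,q}` an edge of `Γ`. -/
def graphProductRels {V : Type*} (Γ : SimpleGraph V) (G : V → Type*)
    [∀ v, Group (G v)] : Subgroup (CoprodI G) :=
  Subgroup.normalClosure
    {x : CoprodI G | ∃ (p q : V) (_ : Γ.Adj p q) (g : G p) (g' : G q),
      x = (CoprodI.of g)⁻¹ * (CoprodI.of g')⁻¹ * CoprodI.of g * CoprodI.of g'}

/-- The graph product of the groups `G v` over the graph `Γ`. -/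
def GraphProduct {V : Type*} (Γ : SimpleGraph V) (G : V → Type*)
    [∀ v, Group (G v)] : Type _ :=
  CoprodI G ⧸ graphProductRels Γ G

instance {V : Type*} (Γ : SimpleGraph V) (G : V → Type*) [∀ v, Group (G v)] :
    (graphProductRels Γ G).Normal :=
  Subgroup.normalClosure_normal

instance {V : Type*} (Γ : SimpleGraph V) (G : V → Type*) [∀ v, Group (G v)] :
    Group (GraphProduct Γ G) :=
  QuotientGroup.Quotient.group _

theorem commute_iff_inv_mul_inv_mul_mul_eq_one {H : Type*} [Group H] {a b : H} :
    Commute a b ↔ a⁻¹ * b⁻¹ * a * b = 1 := by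
  rw [← Commute.inv_inv_iff, ← commutatorElement_eq_one_iff_commute, commutatorElement_def,
    inv_inv, inv_inv]

namespace GraphProduct

variable {V : Type*} {Γ : SimpleGraph V} {G : V → Type*} [∀ v, Group (G v)]

def of (v : V) : G v →* GraphProduct Γ G :=
  (QuotientGroup.mk' (graphProductRels Γ G)).comp CoprodI.of

theorem of_commute {p q : V} (h : Γ.Adj p q) (g : G p) (g' : G q) :
    Commute (of (Γ := Γ) p g) (of q g') :=
  commute_iff_inv_mul_inv_mul_mul_eq_one.mpr <| (QuotientGroup.eq_one_iff _).mpr <|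
    Subgroup.subset_normalClosure ⟨p, q, h, g, g', rfl⟩

variable {H : Type*} [Group H]

def lift (f : ∀ v, G v →* H)
    (hf : ∀ p q, Γ.Adj p q → ∀ (g : G p) (g' : G q), Commute (f p g) (f q g')) :
    GraphProduct Γ G →* H :=
  QuotientGroup.lift _ (CoprodI.lift f) <| Subgroup.normalClosure_le_normal <| by
    rintro _ ⟨p, q, hpq, g, g', rfl⟩
    simpa [CoprodI.lift_of] using
      commute_iff_inv_mul_inv_mul_mul_eq_one.mp (hf p q hpq g g')

@[simp]
theorem lift_of (f : ∀ v, G v →* H)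
    (hf : ∀ p q, Γ.Adj p q → ∀ (g : G p) (g' : G q), Commute (f p g) (f q g'))
    (v : V) (g : G v) : lift f hf (of v g) = f v g :=
  CoprodI.lift_of f g

@[ext]
theorem hom_ext {φ ψ : GraphProduct Γ G →* H} (h : ∀ v, φ.comp (of v) = ψ.comp (of v)) :
    φ = ψ :=
  QuotientGroup.monoidHom_ext _ <| CoprodI.ext_hom _ _ h

variable (Γ G) (V' : Set V)

def inducedMap : GraphProduct (Γ.induce V') (fun v : V' => G v) →* GraphProduct Γ G :=
  lift (fun v => of (v : V)) fun _ _ h => of_commute h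

@[simp]
theorem inducedMap_of (v : V') (g : G v) :
    inducedMap Γ G V' (of (Γ := Γ.induce V') (G := fun v : V' => G v) v g) = of (v : V) g :=
  lift_of (fun v : V' => of (Γ := Γ) (v : V)) _ v g

section Restrict

variable [DecidablePred (· ∈ V')]

def restrictVertex (v : V) : G v →* GraphProduct (Γ.induce V') (fun v : V' => G v) :=
  if h : v ∈ V' then of (Γ := Γ.induce V') (G := fun v : V' => G v) ⟨v, h⟩ else 1

theorem restrictVertex_commute {p q : V} (hpq : Γ.Adj p q) (g : G p) (g' : G q) :
    Commute (restrictVertex Γ G V' p g) (restrictVertex Γ G V' q g') := by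
  unfold restrictVertex
  by_cases hp : p ∈ V'
  · by_cases hq : q ∈ V'
    · simpa only [dif_pos hp, dif_pos hq] using
        of_commute (Γ := Γ.induce V') (G := fun v : V' => G v) (p := ⟨p, hp⟩) (q := ⟨q, hq⟩)
          hpq g g'
    · simp only [dif_neg hq, MonoidHom.one_apply, Commute.one_right]
  · simp only [dif_neg hp, MonoidHom.one_apply, Commute.one_left]

def restrict : GraphProduct Γ G →* GraphProduct (Γ.induce V') (fun v : V' => G v) :=
  lift (restrictVertex Γ G V') fun _ _ => restrictVertex_commute Γ G V'

theorem restrict_comp_inducedMap : (restrict Γ G V').comp (inducedMap Γ G V') = .id _ := by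
  ext v g
  simp [restrict, restrictVertex]

end Restrict

theorem inducedMap_injective : Function.Injective (inducedMap Γ G V') := by
  classical
  exact Function.LeftInverse.injective (g := restrict Γ G V')
    (DFunLike.congr_fun (restrict_comp_inducedMap Γ G V'))

end GraphProduct

theorem graphProduct_induce_injective_general {V : Type*} (Γ : SimpleGraph V)
    (G : V → Type*) [∀ v, Group (G v)] (V' : Set V) :
    ∃ f : GraphProduct (Γ.induce V') (fun v : V' => G v) →* GraphProduct Γ G,
      (∀ (v : V') (g : G v),
        f (QuotientGroup.mk (CoprodI.of (M := fun v : V' => G v) g)) =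
          QuotientGroup.mk (CoprodI.of (M := G) g)) ∧
      Function.Injective f :=
  ⟨GraphProduct.inducedMap Γ G V', GraphProduct.inducedMap_of Γ G V',
    GraphProduct.inducedMap_injective Γ G V'⟩

/-- The natural homomorphism from the graph product over a full (induced) subgraph
to the graph product over the whole graph is injective. -/
theorem graphProduct_induce_injective {V : Type*} [Fintype V] (Γ : SimpleGraph V)
    (G : V → Type*) [∀ v, Group (G v)] (V' : Set V) :
    ∃ f : GraphProduct (Γ.induce V') (fun v : V' => G v) →* GraphProduct Γ G,
      (∀ (v : V') (g : G v),
        f (QuotientGroup.mk (CoprodI.of (M := fun v : V' => G v) g)) =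
          QuotientGroup.mk (CoprodI.of (M := G) g)) ∧
      Function.Injective f :=
  graphProduct_induce_injective_general Γ G V'
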